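/- Let r_0, …, r_{n−1} be integers with 0 ≤ r_i ≤ p−1 and set r = Σ_{i} r_i·p^i. Work in the k[Γ]-module M = ⨂_{i=0}^{n−1} (V_{p−1−r_i} ⊗_k V_{p−1})^{Fr^i}, and for ε = (ε_0,…,ε_{n−1}) ∈ {0,1}^n let b_ε = ⨂_{i=0}^{n−1} E_{(1−ε_i)(p−1−r_i)}, where E_j is formed inside V_{p−1−r_i} ⊗ V_{p−1}. Then: (i) if ε_j = 0 and r_j ≠ p−1 for some index j, then Σ_{u∈U} u·(n_s⁻¹·b_ε) = 0; (ii) if (r_0,…,r_{n−1}) ≠ (0,…,0), then Σ_{u∈U} u·(n_s⁻¹·b_𝟏) = (−1)^{1+r}·b_𝟎, where b_𝟏 = ⨂_i E_0 and b_𝟎 = ⨂_i E_{p−1−r_i}; (iii) if (r_0,…,r_{n−1}) = (0,…,0), then Σ_{u∈U} u·(n_s⁻¹·b_𝟏) = −(b_𝟎 + b_𝟏). -/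

import Mathlib

open Matrix TensorProduct

set_option linter.unusedSectionVars false

set_option synthInstance.maxHeartbeats 4000000
set_option maxHeartbeats 4000000

noncomputable section

abbrev GL2 (F : Type) [Field F] := Matrix.GeneralLinearGroup (Fin 2) F

variable (F : Type) [Field F] [Fintype F] (k : Type) [Field k]

/-- The unipotent upper-triangular matrix `[[1, c], [0, 1]]`. -/
def uElt (c : F) : GL2 F :=
  Matrix.GeneralLinearGroup.mkOfDetNeZero !![1, c; 0, 1] (by simp [Matrix.det_fin_two_of])

/-- The matrix `n_s = [[0, -1], [1, 0]]`. -/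
def nsElt : GL2 F :=
  Matrix.GeneralLinearGroup.mkOfDetNeZero !![0, -1; 1, 0] (by norm_num [Matrix.det_fin_two_of])

variable (ι : F →+* k)

/-- The linear substitution attached to `g ∈ GL₂(𝔽_q)`:
`X = X 0 ↦ ι(a) X + ι(c) Y` and `Y = X 1 ↦ ι(b) X + ι(d) Y` for `g = [[a,b],[c,d]]`. -/
def subMat (g : GL2 F) : Fin 2 → MvPolynomial (Fin 2) k := fun j =>
  ∑ i : Fin 2, MvPolynomial.C (ι ((g : Matrix (Fin 2) (Fin 2) F) i j)) * MvPolynomial.X i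

lemma subMat_one : subMat F k ι 1 = MvPolynomial.X := by
  funext j
  fin_cases j <;>
    simp [subMat, Fin.sum_univ_two, Matrix.one_apply]

lemma subMat_mul (g g' : GL2 F) (j : Fin 2) :
    MvPolynomial.aeval (R := k) (subMat F k ι g) (subMat F k ι g' j) =
      subMat F k ι (g * g') j := by
  fin_cases j <;>
    · simp [subMat, Fin.sum_univ_two, Matrix.mul_apply, Units.val_mul, _root_.map_add,
        _root_.map_mul]
      ring

/-- The representation of `Γ = GL₂(𝔽_q)` on polynomials in `X, Y` over `k`, where
`g = [[a,b],[c,d]]` acts by `X ↦ ι(a)X + ι(c)Y`, `Y ↦ ι(b)X + ι(d)Y`. -/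
def polyRep : Representation k (GL2 F) (MvPolynomial (Fin 2) k) where
  toFun g := (MvPolynomial.aeval (subMat F k ι g)).toLinearMap
  map_one' := by
    refine LinearMap.ext fun f => ?_
    simp [subMat_one, MvPolynomial.aeval_X_left]
  map_mul' g g' := by
    refine LinearMap.ext fun f => ?_
    have h : (MvPolynomial.aeval (R := k) (subMat F k ι g)).comp
        (MvPolynomial.aeval (subMat F k ι g')) =
        MvPolynomial.aeval (subMat F k ι (g * g')) := by
      rw [MvPolynomial.comp_aeval]
      congr 1
      funext j
      exact subMat_mul F k ι g g' j
    calc MvPolynomial.aeval (subMat F k ι (g * g')) f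
        = ((MvPolynomial.aeval (R := k) (subMat F k ι g)).comp
            (MvPolynomial.aeval (subMat F k ι g'))) f := by rw [h]
      _ = _ := rfl

/-- `V_d`, the space of homogeneous polynomials of degree `d` in `X, Y` over `k`. -/
abbrev Vd (d : ℕ) : Submodule k (MvPolynomial (Fin 2) k) :=
  MvPolynomial.homogeneousSubmodule (Fin 2) k d

lemma subMat_isHomogeneous (g : GL2 F) (j : Fin 2) :
    (subMat F k ι g j).IsHomogeneous 1 := by
  unfold subMat
  rw [Fin.sum_univ_two]
  exact ((MvPolynomial.isHomogeneous_X k 0).C_mul _).add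
    ((MvPolynomial.isHomogeneous_X k 1).C_mul _)

lemma polyRep_stab (g : GL2 F) (d : ℕ) :
    ∀ f ∈ Vd k d, polyRep F k ι g f ∈ Vd k d := by
  intro f hf
  rw [MvPolynomial.mem_homogeneousSubmodule] at hf ⊢
  show (MvPolynomial.aeval (subMat F k ι g) f).IsHomogeneous d
  simpa using hf.aeval (g := subMat F k ι g) (n := 1)
    (fun j => subMat_isHomogeneous F k ι g j)

/-- The representation of `Γ = GL₂(𝔽_q)` on `V_d`. -/
def VdRep (d : ℕ) : Representation k (GL2 F) (Vd k d) where
  toFun g := (polyRep F k ι g).restrict (polyRep_stab F k ι g d)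
  map_one' := by
    refine LinearMap.ext fun x => Subtype.ext ?_
    simp [LinearMap.restrict_apply]
  map_mul' g g' := by
    refine LinearMap.ext fun x => Subtype.ext ?_
    simp [LinearMap.restrict_apply]

/-- The divided-power basis vector `m_i = C(d, i) X^{d-i} Y^i` of `V_d`
(zero when `i > d`). -/
def mItem (d i : ℕ) : MvPolynomial (Fin 2) k :=
  MvPolynomial.C (d.choose i : k) * (MvPolynomial.X 0 ^ (d - i) * MvPolynomial.X 1 ^ i)

lemma mItem_mem (d i : ℕ) : mItem k d i ∈ Vd k d := by
  rw [MvPolynomial.mem_homogeneousSubmodule]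
  by_cases h : i ≤ d
  · have : (MvPolynomial.X (0 : Fin 2) ^ (d - i) * MvPolynomial.X 1 ^ i :
        MvPolynomial (Fin 2) k).IsHomogeneous d := by
      have := ((MvPolynomial.isHomogeneous_X k (0 : Fin 2)).pow (d - i)).mul
        ((MvPolynomial.isHomogeneous_X k (1 : Fin 2)).pow i)
      simpa [Nat.sub_add_cancel h] using this
    exact this.C_mul _
  · have : (d.choose i : k) = 0 := by
      rw [Nat.choose_eq_zero_of_lt (Nat.lt_of_not_le h)]
      exact Nat.cast_zero
    simp [mItem, this]
    exact MvPolynomial.isHomogeneous_zero _ _ _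

/-- `m_i` as an element of `V_d`. -/
def mElt (d i : ℕ) : Vd k d := ⟨mItem k d i, mItem_mem k d i⟩

/-- The element `E_i = ∑_{a+b=i} m_a ⊗ m_b` of `V_{d₁} ⊗ V_{d₂}` (the terms with `a > d₁`
or `b > d₂` vanish). -/
def EElt (d₁ d₂ : ℕ) (i : ℕ) : ↥(Vd k d₁) ⊗[k] ↥(Vd k d₂) :=
  ∑ a ∈ Finset.range (i + 1), mElt k d₁ a ⊗ₜ[k] mElt k d₂ (i - a)

/-- The representation of `G` on the `n`-fold tensor product `⨂ᵢ W i` built from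
representations on the factors. -/
def piRep {G : Type} [Group G] {n : ℕ} {W : Fin n → Type} [∀ i, AddCommGroup (W i)]
    [∀ i, Module k (W i)] (ρs : ∀ i, Representation k G (W i)) :
    Representation k G (⨂[k] i, W i) where
  toFun g := PiTensorProduct.map fun i => ρs i g
  map_one' := by
    show PiTensorProduct.map (fun i => ρs i 1) = 1
    have h : (fun i => ρs i 1) = fun i => (LinearMap.id : W i →ₗ[k] W i) := by
      funext i; rw [_root_.map_one]; rfl
    rw [h, PiTensorProduct.map_id]
    rfl
  map_mul' g g' := by
    show PiTensorProduct.map (fun i => ρs i (g * g')) =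
      PiTensorProduct.map (fun i => ρs i g) * PiTensorProduct.map (fun i => ρs i g')
    have h : (fun i => ρs i (g * g')) = fun i => (ρs i g) ∘ₗ (ρs i g') := by
      funext i; rw [_root_.map_mul]; rfl
    rw [h, PiTensorProduct.map_comp]
    rfl

/-- The `j`-th power of the Frobenius automorphism applied entrywise to `GL₂(𝔽_q)`. -/
def frobGL (p : ℕ) [Fact p.Prime] [CharP F p] (j : ℕ) : GL2 F →* GL2 F :=
  haveI : ExpChar F p := ExpChar.prime Fact.out
  Matrix.GeneralLinearGroup.map (iterateFrobenius F p j)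

variable (p : ℕ) [Fact p.Prime] [CharP F p] {n : ℕ}

/-- The representation of `Γ` on `M = ⨂ᵢ (V_{p-1-rᵢ} ⊗ V_{p-1})^{Fr^i}`. -/
def bigRep (r : Fin n → ℕ) :
    Representation k (GL2 F)
      (⨂[k] i : Fin n, (↥(Vd k (p - 1 - r i)) ⊗[k] ↥(Vd k (p - 1)))) :=
  piRep k (W := fun i : Fin n => ↥(Vd k (p - 1 - r i)) ⊗[k] ↥(Vd k (p - 1))) fun i =>
    (((VdRep F k ι (p - 1 - r i)).tprod (VdRep F k ι (p - 1))).comp (frobGL F p i))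

/-- The vector `b_ε = ⨂ᵢ E_{(1-εᵢ)(p-1-rᵢ)}` of `M`. -/
def bEps (r ε : Fin n → ℕ) :
    ⨂[k] i : Fin n, (↥(Vd k (p - 1 - r i)) ⊗[k] ↥(Vd k (p - 1))) :=
  PiTensorProduct.tprod k fun i => EElt k (p - 1 - r i) (p - 1) ((1 - ε i) * (p - 1 - r i))

/-- The additive group structure of `M` (Mathlib's `PiTensorProduct` instance, given its
factors explicitly because instance search no longer finds it unaided). -/
instance bigAddCommGroup (r : Fin n → ℕ) :
    AddCommGroup (⨂[k] i : Fin n, (↥(Vd k (p - 1 - r i)) ⊗[k] ↥(Vd k (p - 1)))) :=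
  PiTensorProduct.instAddCommGroup
    (s := fun i : Fin n => ↥(Vd k (p - 1 - r i)) ⊗[k] ↥(Vd k (p - 1)))

/-!
On a factor `V_{d₁} ⊗ V_{d₂}` put `D = d₁ + d₂`. The element `n_s⁻¹` sends `E_j` to
`(-1)^(D-j) E_{D-j}`, and `u(t)` sends `E_j` to `∑_{m ≤ j} C(D-m, j-m) t^(j-m) E_m`. For the
latter, the coefficient of `m_b` in `u(t) m_a` is the `a`-th coefficient of `Z^b (1 + tZ)^(d-b)`,
so the Vandermonde convolution over `a + a' = j` is a coefficient of the product
`Z^(b+b') (1 + tZ)^(D-b-b')` of two such polynomials.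
In the Frobenius-twisted factor `i` the parameter is `t^(p^i)`, so summing over `t ∈ 𝔽_q` leaves
the power sums `∑_t t^N` with `N = ∑ p^i e_i` and `0 ≤ e_i ≤ 2(p-1)`. Such a sum is `-1` when `N`
is a positive multiple of `q - 1` and `0` otherwise, and by uniqueness of base-`p` expansions this
happens only for `e ≡ p-1` or `e ≡ 2(p-1)`. For `b_ε` with `ε_j = 0` and `r_j ≠ p-1` every
surviving term carries the factor `C(2p-2-r_j, p-1) ≡ 0 (mod p)`; for `b_𝟏` the survivors are
`b_𝟎` and, when `r = 0`, `b_𝟏`, with the sign `(-1)^(∑ (2p-2-r_i)) = (-1)^r`.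
-/

open Finset

lemma polyRep_nsElt_inv_mItem (d a : ℕ) (ha : a ≤ d) :
    polyRep F k ι (nsElt F)⁻¹ (mItem k d a) = (-1 : k) ^ (d - a) • mItem k d (d - a) := by
  have hinv : ((nsElt F)⁻¹ : GL2 F) = Matrix.GeneralLinearGroup.mkOfDetNeZero !![0, 1; -1, 0]
      (by simp [Matrix.det_fin_two_of]) := by
    rw [inv_eq_iff_mul_eq_one]
    ext i j
    fin_cases i <;> fin_cases j <;> simp [nsElt]
  have h₀ : subMat F k ι (nsElt F)⁻¹ 0 = -MvPolynomial.X 1 := by simp [hinv, subMat]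
  have h₁ : subMat F k ι (nsElt F)⁻¹ 1 = MvPolynomial.X 0 := by simp [hinv, subMat]
  show MvPolynomial.aeval (subMat F k ι _) _ = _
  simp only [mItem, map_mul, map_pow, MvPolynomial.aeval_C, MvPolynomial.aeval_X, h₀, h₁,
    Nat.choose_symm ha, Nat.sub_sub_self ha, MvPolynomial.smul_eq_C_mul,
    MvPolynomial.algebraMap_eq]
  rw [neg_pow, map_neg, map_one]
  ring

lemma polyRep_uElt_mItem (t : F) (d a : ℕ) (ha : a ≤ d) :
    polyRep F k ι (uElt F t) (mItem k d a) =
      ∑ b ∈ range (a + 1), ((d - b).choose (a - b) * ι t ^ (a - b) : k) • mItem k d b := by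
  have h₀ : subMat F k ι (uElt F t) 0 = MvPolynomial.X 0 := by simp [uElt, subMat]
  have h₁ : subMat F k ι (uElt F t) 1 =
      MvPolynomial.X 1 + MvPolynomial.C (ι t) * MvPolynomial.X 0 := by
    simp [uElt, subMat, add_comm]
  show MvPolynomial.aeval (subMat F k ι _) _ = _
  simp only [mItem, map_mul, map_pow, MvPolynomial.aeval_C, MvPolynomial.aeval_X, h₀, h₁,
    MvPolynomial.algebraMap_eq, add_pow, mul_sum]
  refine sum_congr rfl fun b hb => ?_
  have hba : b ≤ a := Nat.lt_succ_iff.mp (mem_range.mp hb)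
  have hchoose : (d.choose a * a.choose b : MvPolynomial (Fin 2) k) =
      d.choose b * (d - b).choose (a - b) := by
    rw [← Nat.cast_mul, ← Nat.cast_mul, Nat.choose_mul hba]
  rw [MvPolynomial.smul_eq_C_mul, show (MvPolynomial.X 0 : MvPolynomial (Fin 2) k) ^ (d - b) =
    MvPolynomial.X 0 ^ (d - a) * MvPolynomial.X 0 ^ (a - b) by rw [← pow_add]; congr 1; omega]
  simp only [map_mul, map_pow, map_natCast]
  linear_combination (MvPolynomial.X 0 ^ (d - a) * MvPolynomial.X 0 ^ (a - b) *
    MvPolynomial.X 1 ^ b * MvPolynomial.C (ι t) ^ (a - b)) * hchoose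

lemma mElt_eq_zero {d a : ℕ} (h : d < a) : mElt k d a = 0 :=
  Subtype.ext (by simp [mElt, mItem, Nat.choose_eq_zero_of_lt h])

lemma VdRep_nsElt_inv_mElt (d a : ℕ) (ha : a ≤ d) :
    VdRep F k ι d (nsElt F)⁻¹ (mElt k d a) = (-1 : k) ^ (d - a) • mElt k d (d - a) :=
  Subtype.ext (polyRep_nsElt_inv_mItem F k ι d a ha)

/-- The `a`-th coefficient of `shearPoly (ι t) d b` is the coefficient of `m_b` in `u(t) m_a`. -/
def shearPoly {R : Type*} [CommRing R] (s : R) (d b : ℕ) : Polynomial R :=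
  Polynomial.X ^ b * (1 + Polynomial.C s * Polynomial.X) ^ (d - b)

open Polynomial in
lemma coeff_shearPoly {R : Type*} [CommRing R] (s : R) (d b a : ℕ) :
    (shearPoly s d b).coeff a =
      if b ≤ a then ((d - b).choose (a - b) * s ^ (a - b) : R) else 0 := by
  rw [shearPoly, coeff_X_pow_mul',
    show (1 + C s * X) ^ (d - b) = ((1 + X) ^ (d - b)).comp (C s * X) by simp [pow_comp],
    comp_C_mul_X_coeff, coeff_one_add_X_pow]

lemma natDegree_shearPoly_le {R : Type*} [CommRing R] (s : R) {d b : ℕ} (hb : b ≤ d) :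
    (shearPoly s d b).natDegree ≤ d := by
  unfold shearPoly
  compute_degree
  omega

lemma shearPoly_mul_shearPoly {R : Type*} [CommRing R] (s : R) {d₁ d₂ b₁ b₂ : ℕ}
    (h₁ : b₁ ≤ d₁) (h₂ : b₂ ≤ d₂) :
    shearPoly s d₁ b₁ * shearPoly s d₂ b₂ = shearPoly s (d₁ + d₂) (b₁ + b₂) := by
  rw [shearPoly, shearPoly, shearPoly,
    show d₁ + d₂ - (b₁ + b₂) = (d₁ - b₁) + (d₂ - b₂) by omega, pow_add, pow_add]
  ring

lemma VdRep_uElt_mElt (t : F) (d a : ℕ) (ha : a ≤ d) :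
    VdRep F k ι d (uElt F t) (mElt k d a) =
      ∑ b ∈ range (d + 1), (shearPoly (ι t) d b).coeff a • mElt k d b := by
  have hsub : range (a + 1) ⊆ range (d + 1) := range_subset_range.mpr (by omega)
  rw [← sum_subset hsub fun b _ hb => by
    rw [coeff_shearPoly, if_neg (by simpa using hb), zero_smul]]
  refine Subtype.ext ?_
  simp only [Submodule.coe_sum, Submodule.coe_smul]
  refine (polyRep_uElt_mItem F k ι t d a ha).trans (sum_congr rfl fun b hb => ?_)
  rw [coeff_shearPoly, if_pos (by simpa [Nat.lt_succ_iff] using hb)]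
  rfl

open Polynomial in
lemma sum_box_coeff_mul_coeff {R : Type*} [CommRing R] {P Q : R[X]} {d₁ d₂ : ℕ}
    (hP : P.natDegree ≤ d₁) (hQ : Q.natDegree ≤ d₂) (j : ℕ) :
    ∑ x ∈ range (d₁ + 1) ×ˢ range (d₂ + 1),
      (if x.1 + x.2 = j then 1 else 0) * (P.coeff x.1 * Q.coeff x.2) = (P * Q).coeff j := by
  simp only [coeff_mul, ite_mul, one_mul, zero_mul, ← sum_filter]
  refine sum_subset (fun x hx => by simp_all) fun x hx hx' => ?_
  simp only [mem_filter, mem_product, mem_range, HasAntidiagonal.mem_antidiagonal] at hx hx'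
  by_cases h : x.1 ≤ d₁
  · rw [coeff_eq_zero_of_natDegree_lt (p := Q) (by omega), mul_zero]
  · rw [coeff_eq_zero_of_natDegree_lt (by omega), zero_mul]

section TensorAction

variable (d₁ d₂ : ℕ)

def tensorComb : (ℕ × ℕ → k) →ₗ[k] ↥(Vd k d₁) ⊗[k] ↥(Vd k d₂) :=
  ∑ x ∈ range (d₁ + 1) ×ˢ range (d₂ + 1),
    (LinearMap.proj x : (ℕ × ℕ → k) →ₗ[k] k).smulRight (mElt k d₁ x.1 ⊗ₜ mElt k d₂ x.2)

lemma tensorComb_apply (c : ℕ × ℕ → k) :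
    tensorComb k d₁ d₂ c =
      ∑ x ∈ range (d₁ + 1) ×ˢ range (d₂ + 1), c x • (mElt k d₁ x.1 ⊗ₜ mElt k d₂ x.2) := by
  simp [tensorComb]

variable {d₁ d₂} in
lemma tensorComb_congr {c c' : ℕ × ℕ → k}
    (h : ∀ x ∈ range (d₁ + 1) ×ˢ range (d₂ + 1), c x = c' x) :
    tensorComb k d₁ d₂ c = tensorComb k d₁ d₂ c' := by
  simp only [tensorComb_apply]
  exact sum_congr rfl fun x hx => by rw [h x hx]

lemma EElt_eq_tensorComb (j : ℕ) :
    EElt k d₁ d₂ j = tensorComb k d₁ d₂ (fun x => if x.1 + x.2 = j then 1 else 0) := by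
  rw [tensorComb_apply, EElt,
    ← Finset.Nat.sum_antidiagonal_eq_sum_range_succ_mk (fun x => mElt k d₁ x.1 ⊗ₜ mElt k d₂ x.2)]
  simp only [ite_smul, one_smul, zero_smul, ← sum_filter]
  refine (sum_subset (fun x hx => by simp_all) fun x hx hx' => ?_).symm
  simp only [mem_filter, mem_product, mem_range, HasAntidiagonal.mem_antidiagonal] at hx hx'
  by_cases h : x.1 ≤ d₁
  · rw [mElt_eq_zero k (d := d₂) (by omega), tmul_zero]
  · rw [mElt_eq_zero k (d := d₁) (by omega), zero_tmul]

lemma tprod_nsElt_inv_tensorComb (c : ℕ × ℕ → k) :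
    (VdRep F k ι d₁).tprod (VdRep F k ι d₂) (nsElt F)⁻¹ (tensorComb k d₁ d₂ c) =
      tensorComb k d₁ d₂ (fun x => (-1) ^ (x.1 + x.2) * c (d₁ - x.1, d₂ - x.2)) := by
  rw [tensorComb_apply, tensorComb_apply, map_sum]
  refine sum_nbij' (fun x => (d₁ - x.1, d₂ - x.2)) (fun x => (d₁ - x.1, d₂ - x.2))
    (by simp) (by simp) (fun x hx => ?_) (fun x hx => ?_) fun x hx => ?_
  all_goals simp only [mem_product, mem_range] at hx
  · exact Prod.ext (Nat.sub_sub_self (by omega)) (Nat.sub_sub_self (by omega))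
  · exact Prod.ext (Nat.sub_sub_self (by omega)) (Nat.sub_sub_self (by omega))
  · rw [map_smul, Representation.tprod_apply, map_tmul,
      VdRep_nsElt_inv_mElt F k ι d₁ x.1 (by omega), VdRep_nsElt_inv_mElt F k ι d₂ x.2 (by omega),
      smul_tmul_smul, smul_smul, Nat.sub_sub_self (by omega : x.1 ≤ d₁),
      Nat.sub_sub_self (by omega : x.2 ≤ d₂), pow_add]
    ring_nf

lemma tprod_uElt_tensorComb (t : F) (c : ℕ × ℕ → k) :
    (VdRep F k ι d₁).tprod (VdRep F k ι d₂) (uElt F t) (tensorComb k d₁ d₂ c) =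
      tensorComb k d₁ d₂ (fun y => ∑ x ∈ range (d₁ + 1) ×ˢ range (d₂ + 1),
        c x * ((shearPoly (ι t) d₁ y.1).coeff x.1 * (shearPoly (ι t) d₂ y.2).coeff x.2)) := by
  have hbasis : ∀ x ∈ range (d₁ + 1) ×ˢ range (d₂ + 1),
      (VdRep F k ι d₁).tprod (VdRep F k ι d₂) (uElt F t) (mElt k d₁ x.1 ⊗ₜ mElt k d₂ x.2) =
        ∑ y ∈ range (d₁ + 1) ×ˢ range (d₂ + 1),
          ((shearPoly (ι t) d₁ y.1).coeff x.1 * (shearPoly (ι t) d₂ y.2).coeff x.2) •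
            (mElt k d₁ y.1 ⊗ₜ mElt k d₂ y.2) := by
    intro x hx
    simp only [mem_product, mem_range] at hx
    rw [Representation.tprod_apply, map_tmul, VdRep_uElt_mElt F k ι t d₁ x.1 (by omega),
      VdRep_uElt_mElt F k ι t d₂ x.2 (by omega), sum_tmul, sum_product]
    simp_rw [tmul_sum, smul_tmul_smul]
  rw [tensorComb_apply, tensorComb_apply, map_sum]
  simp_rw [map_smul]
  rw [sum_congr rfl fun x hx => by rw [hbasis x hx]]
  simp_rw [smul_sum, smul_smul, sum_smul]
  exact sum_comm

variable {d₁ d₂} in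
lemma tprod_nsElt_inv_EElt {j : ℕ} (hj : j ≤ d₁ + d₂) :
    (VdRep F k ι d₁).tprod (VdRep F k ι d₂) (nsElt F)⁻¹ (EElt k d₁ d₂ j) =
      (-1 : k) ^ (d₁ + d₂ - j) • EElt k d₁ d₂ (d₁ + d₂ - j) := by
  rw [EElt_eq_tensorComb, EElt_eq_tensorComb, tprod_nsElt_inv_tensorComb, ← map_smul]
  refine tensorComb_congr k fun x hx => ?_
  simp only [mem_product, mem_range] at hx
  by_cases h : x.1 + x.2 = d₁ + d₂ - j
  · simp [h, show d₁ - x.1 + (d₂ - x.2) = j by omega]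
  · simp [h, show d₁ - x.1 + (d₂ - x.2) ≠ j by omega]

lemma tprod_uElt_EElt (t : F) (j : ℕ) :
    (VdRep F k ι d₁).tprod (VdRep F k ι d₂) (uElt F t) (EElt k d₁ d₂ j) =
      ∑ m ∈ range (j + 1),
        ((d₁ + d₂ - m).choose (j - m) * ι t ^ (j - m) : k) • EElt k d₁ d₂ m := by
  simp_rw [EElt_eq_tensorComb, tprod_uElt_tensorComb, ← map_smul, ← map_sum]
  refine tensorComb_congr k fun y hy => ?_
  simp only [mem_product, mem_range] at hy
  rw [sum_box_coeff_mul_coeff (natDegree_shearPoly_le _ (by omega : y.1 ≤ d₁))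
    (natDegree_shearPoly_le _ (by omega : y.2 ≤ d₂)),
    shearPoly_mul_shearPoly _ (by omega) (by omega), coeff_shearPoly]
  simp [Finset.sum_apply]

end TensorAction

lemma eq_zero_of_sum_pow_mul_eq_zero {b : ℤ} :
    ∀ {n : ℕ} (f : Fin n → ℤ), (∀ i, |f i| < b) → ∑ i : Fin n, b ^ (i : ℕ) * f i = 0 → ∀ i, f i = 0
  | 0, _, _, _ => fun i => i.elim0
  | n + 1, f, hf, hsum => by
    have htail : ∑ i : Fin (n + 1), b ^ (i : ℕ) * f i =
        f 0 + b * ∑ i : Fin n, b ^ (i : ℕ) * f i.succ := by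
      simp only [Fin.sum_univ_succ, Fin.val_zero, pow_zero, one_mul, Fin.val_succ, pow_succ,
        mul_sum]
      ring_nf
    rw [htail] at hsum
    have h0 : f 0 = 0 :=
      Int.eq_zero_of_abs_lt_dvd ⟨-∑ i : Fin n, b ^ (i : ℕ) * f i.succ, by linarith⟩ (hf 0)
    have hb : 0 < b := (abs_nonneg _).trans_lt (hf 0)
    have hrest := eq_zero_of_sum_pow_mul_eq_zero (fun i => f i.succ) (fun i => hf i.succ)
      (by simpa [h0, hb.ne'] using hsum)
    exact Fin.cases h0 hrest

lemma sum_pow_mul_sub_one {b : ℕ} (hb : 0 < b) (n : ℕ) :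
    ∑ i : Fin n, b ^ (i : ℕ) * (b - 1) = b ^ n - 1 := by
  have h := geom_sum_mul_add (b - 1) n
  rw [show b - 1 + 1 = b by omega] at h
  rw [Fin.sum_univ_eq_sum_range (fun i => b ^ i * (b - 1)), ← sum_mul]
  omega

lemma digits_eq_of_dvd_sum {b n : ℕ} (hb : 0 < b) (e : Fin n → ℕ) (he : ∀ i, e i ≤ 2 * (b - 1))
    (hne : ∑ i : Fin n, b ^ (i : ℕ) * e i ≠ 0) (hdvd : b ^ n - 1 ∣ ∑ i : Fin n, b ^ (i : ℕ) * e i) :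
    (∀ i, e i = b - 1) ∨ (∀ i, e i = 2 * (b - 1)) := by
  have hle : ∀ i ∈ (univ : Finset (Fin n)), b ^ (i : ℕ) * e i ≤ b ^ (i : ℕ) * (2 * (b - 1)) :=
    fun i _ => Nat.mul_le_mul_left _ (he i)
  have hmax : ∑ i : Fin n, b ^ (i : ℕ) * (2 * (b - 1)) = 2 * (b ^ n - 1) := by
    rw [← sum_pow_mul_sub_one hb, mul_sum]
    exact sum_congr rfl fun i _ => by ring
  obtain ⟨m, hm⟩ := hdvd
  have hm2 : m ≤ 2 := by
    have := (sum_le_sum hle).trans_eq hmax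
    rw [hm] at this hne
    exact Nat.le_of_mul_le_mul_left (by rwa [mul_comm 2] at this)
      (Nat.pos_of_ne_zero (left_ne_zero_of_mul hne))
  interval_cases m
  · exact absurd (hm.trans (mul_zero _)) hne
  · left
    have hnat : ∑ i : Fin n, b ^ (i : ℕ) * e i = ∑ i : Fin n, b ^ (i : ℕ) * (b - 1) := by
      rw [hm, mul_one, sum_pow_mul_sub_one hb]
    have hint : ∑ i : Fin n, (b : ℤ) ^ (i : ℕ) * e i =
        ∑ i : Fin n, (b : ℤ) ^ (i : ℕ) * (b - 1) := by
      have := congrArg (Nat.cast : ℕ → ℤ) hnat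
      push_cast [Nat.cast_sub hb] at this
      exact this
    have hsum : ∑ i : Fin n, (b : ℤ) ^ (i : ℕ) * ((e i : ℤ) - (b - 1)) = 0 := by
      rw [← sub_eq_zero, ← sum_sub_distrib] at hint
      simpa only [mul_sub] using hint
    intro i
    have := eq_zero_of_sum_pow_mul_eq_zero _ (fun i => by
      rw [abs_lt]; have := he i; constructor <;> omega) hsum i
    omega
  · right
    have heq := (sum_eq_sum_iff_of_le hle).mp (hm.trans (by rw [hmax]; ring))
    exact fun i => Nat.eq_of_mul_eq_mul_left (by positivity) (heq i (mem_univ i))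

lemma sum_pow_eq_ite (K : Type*) [Field K] [Fintype K] (N : ℕ) :
    ∑ x : K, x ^ N = if N ≠ 0 ∧ Fintype.card K - 1 ∣ N then -1 else 0 := by
  classical
  by_cases hN : N = 0
  · simp [hN]
  rw [Fintype.sum_eq_add_sum_compl 0, zero_pow hN, zero_add]
  have hunits : ∑ x ∈ {(0 : K)}ᶜ, x ^ N = ∑ x : Kˣ, (x : K) ^ N :=
    sum_bij' (fun x hx => Units.mk0 x (by simpa using hx)) (fun x _ => x)
      (by simp) (by simp) (by simp) (by simp) (by simp)
  rw [hunits, FiniteField.sum_pow_units]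
  simp [hN]

lemma sum_pow_sum_digits {K : Type*} [Field K] [Fintype K] {b n : ℕ}
    (hK : Fintype.card K = b ^ n) (e : Fin n → ℕ) (he : ∀ i, e i ≤ 2 * (b - 1)) :
    ∑ x : K, x ^ (∑ i : Fin n, b ^ (i : ℕ) * e i) =
      (if ∀ i, e i = b - 1 then -1 else 0) + (if ∀ i, e i = 2 * (b - 1) then -1 else 0) := by
  have hcard : 1 < b ^ n := hK ▸ Fintype.one_lt_card
  have hn : 0 < n := Nat.pos_of_ne_zero (by rintro rfl; simp at hcard)
  have hb : 1 < b := (Nat.one_lt_pow_iff hn.ne').mp hcard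
  rw [sum_pow_eq_ite, hK]
  by_cases h₁ : ∀ i, e i = b - 1
  · have h₂ : ¬ ∀ i, e i = 2 * (b - 1) := fun h₂ => by
      have := h₁ ⟨0, hn⟩
      have := h₂ ⟨0, hn⟩
      omega
    have hsum : ∑ i : Fin n, b ^ (i : ℕ) * e i = b ^ n - 1 := by
      simp_rw [h₁, sum_pow_mul_sub_one (by omega : 0 < b)]
    rw [hsum, if_pos ⟨by omega, dvd_rfl⟩, if_pos h₁, if_neg h₂, add_zero]
  by_cases h₂ : ∀ i, e i = 2 * (b - 1)
  · have hsum : ∑ i : Fin n, b ^ (i : ℕ) * e i = 2 * (b ^ n - 1) := by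
      simp_rw [h₂, mul_left_comm _ 2, ← mul_sum, sum_pow_mul_sub_one (by omega : 0 < b)]
    rw [hsum, if_pos ⟨by omega, dvd_mul_left _ _⟩, if_neg h₁, if_pos h₂, zero_add]
  · rw [if_neg fun h => (digits_eq_of_dvd_sum (by omega) e he h.1 h.2).elim h₁ h₂, if_neg h₁,
      if_neg h₂, add_zero]

lemma frobGL_uElt (K : Type) [Field K] [CharP K p] (j : ℕ) (t : K) :
    frobGL K p j (uElt K t) = uElt K (t ^ p ^ j) := by
  ext a b
  fin_cases a <;> fin_cases b <;>
    simp [frobGL, uElt, iterateFrobenius_def, (Fact.out : p.Prime).ne_zero]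

lemma frobGL_nsElt_inv (K : Type) [Field K] [CharP K p] (j : ℕ) :
    frobGL K p j (nsElt K)⁻¹ = (nsElt K)⁻¹ := by
  rw [map_inv, _root_.inv_inj]
  ext a b
  fin_cases a <;> fin_cases b <;>
    simp [frobGL, nsElt, iterateFrobenius_def, (Fact.out : p.Prime).ne_zero, neg_one_pow_char_pow]

/-- The instance `[Decidable (∀ i, c ≤ K i)]` is a parameter so that the lemma also matches the
`if`s over `Fin n`, which elaborate with `Nat.decidableForallFin`. -/
lemma sum_piFinset_ite_forall_sub_eq {I M : Type*} [Fintype I] [DecidableEq I] [AddCommMonoid M]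
    (K : I → ℕ) (c : ℕ) (f : (I → ℕ) → M) [Decidable (∀ i, c ≤ K i)] :
    ∑ γ ∈ Fintype.piFinset (fun i => range (K i + 1)), (if ∀ i, K i - γ i = c then f γ else 0) =
      if ∀ i, c ≤ K i then f (fun i => K i - c) else 0 := by
  have hiff : ∀ γ ∈ Fintype.piFinset (fun i => range (K i + 1)),
      (∀ i, K i - γ i = c) ↔ (∀ i, c ≤ K i) ∧ (fun i => K i - c) = γ := by
    intro γ hγ
    simp only [Fintype.mem_piFinset, mem_range] at hγ
    simp only [funext_iff]
    exact ⟨fun h => ⟨fun i => by have := h i; have := hγ i; omega, fun i => by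
      have := h i; have := hγ i; omega⟩, fun h i => by have := h.1 i; have := h.2 i; omega⟩
  rw [sum_congr rfl fun γ hγ => if_congr (hiff γ hγ) rfl rfl]
  by_cases hc : ∀ i, c ≤ K i <;> simp [hc]

lemma cast_choose_sub_one_eq_zero [CharP k p] {s : ℕ} (hs : s < p - 1) :
    ((p - 1 - s + (p - 1)).choose (p - 1) : k) = 0 := by
  rw [CharP.cast_eq_zero_iff k p, add_comm]
  exact (Fact.out : p.Prime).dvd_choose_add (by omega) (by omega) (by omega)

lemma prod_neg_one_pow_eq [CharP k p] (r : Fin n → ℕ) (hr : ∀ i, r i ≤ p - 1) :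
    ∏ i, (-1 : k) ^ (p - 1 - r i + (p - 1)) = (-1) ^ ∑ i : Fin n, r i * p ^ (i : ℕ) := by
  rw [← prod_pow_eq_pow_sum]
  refine prod_congr rfl fun i _ => ?_
  rw [pow_mul', neg_one_pow_char_pow, neg_one_pow_eq_pow_mod_two,
    show (p - 1 - r i + (p - 1)) % 2 = r i % 2 by have := hr i; omega,
    ← neg_one_pow_eq_pow_mod_two]

section TwistedTensor

variable (r : Fin n → ℕ)

lemma bigRep_tprod (g : GL2 F) (f : ∀ i : Fin n, ↥(Vd k (p - 1 - r i)) ⊗[k] ↥(Vd k (p - 1))) :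
    bigRep F k ι p r g (⨂ₜ[k] i, f i) =
      ⨂ₜ[k] i, (VdRep F k ι (p - 1 - r i)).tprod (VdRep F k ι (p - 1)) (frobGL F p i g) (f i) :=
  PiTensorProduct.map_tprod _ _

lemma bigRep_nsElt_inv_tprod_EElt (J : Fin n → ℕ) (hJ : ∀ i, J i ≤ p - 1 - r i + (p - 1)) :
    bigRep F k ι p r (nsElt F)⁻¹ (⨂ₜ[k] i, EElt k (p - 1 - r i) (p - 1) (J i)) =
      (∏ i, (-1 : k) ^ (p - 1 - r i + (p - 1) - J i)) •
        ⨂ₜ[k] i, EElt k (p - 1 - r i) (p - 1) (p - 1 - r i + (p - 1) - J i) := by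
  simp_rw [bigRep_tprod, frobGL_nsElt_inv, tprod_nsElt_inv_EElt F k ι (hJ _)]
  exact MultilinearMap.map_smul_univ _ _ _

lemma sum_bigRep_uElt_tprod_EElt (K : Fin n → ℕ) :
    ∑ c : F, bigRep F k ι p r (uElt F c) (⨂ₜ[k] i, EElt k (p - 1 - r i) (p - 1) (K i)) =
      ∑ γ ∈ Fintype.piFinset fun i => range (K i + 1),
        ((∏ i, ((p - 1 - r i + (p - 1) - γ i).choose (K i - γ i) : k)) *
          ∑ c : F, ι c ^ ∑ i : Fin n, p ^ (i : ℕ) * (K i - γ i)) •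
        ⨂ₜ[k] i, EElt k (p - 1 - r i) (p - 1) (γ i) := by
  simp_rw [bigRep_tprod, frobGL_uElt, tprod_uElt_EElt, MultilinearMap.map_sum_finset,
    MultilinearMap.map_smul_univ]
  rw [sum_comm]
  refine sum_congr rfl fun γ _ => ?_
  rw [mul_sum, sum_smul]
  refine sum_congr rfl fun c _ => ?_
  rw [prod_mul_distrib, ← prod_pow_eq_pow_sum]
  simp_rw [map_pow, pow_mul]

lemma sum_bigRep_uElt_tprod_EElt_eq (hF : Fintype.card F = p ^ n) (K : Fin n → ℕ)
    (hK : ∀ i, K i ≤ p - 1 - r i + (p - 1)) :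
    ∑ c : F, bigRep F k ι p r (uElt F c) (⨂ₜ[k] i, EElt k (p - 1 - r i) (p - 1) (K i)) =
      (if ∀ i, p - 1 ≤ K i then
        -((∏ i, ((p - 1 - r i + (p - 1) - (K i - (p - 1))).choose (p - 1) : k)) •
          ⨂ₜ[k] i, EElt k (p - 1 - r i) (p - 1) (K i - (p - 1))) else 0) +
      (if ∀ i, 2 * (p - 1) ≤ K i then
        -((∏ i, ((p - 1 - r i + (p - 1) - (K i - 2 * (p - 1))).choose (2 * (p - 1)) : k)) •
          ⨂ₜ[k] i, EElt k (p - 1 - r i) (p - 1) (K i - 2 * (p - 1))) else 0) := by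
  have hterm : ∀ (γ : Fin n → ℕ) (w : ℕ), (∀ i, K i - γ i = w) →
      (∏ i, ((p - 1 - r i + (p - 1) - γ i).choose (K i - γ i) : k)) =
        ∏ i, ((p - 1 - r i + (p - 1) - γ i).choose w : k) := fun γ w h => by simp_rw [h]
  rw [sum_bigRep_uElt_tprod_EElt]
  refine (sum_congr rfl fun γ hγ => ?_).trans (sum_add_distrib.trans (congrArg₂ (· + ·)
    (sum_piFinset_ite_forall_sub_eq K (p - 1) fun γ => -((∏ i,
      ((p - 1 - r i + (p - 1) - γ i).choose (p - 1) : k)) •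
        ⨂ₜ[k] i, EElt k (p - 1 - r i) (p - 1) (γ i)))
    (sum_piFinset_ite_forall_sub_eq K (2 * (p - 1)) fun γ => -((∏ i,
      ((p - 1 - r i + (p - 1) - γ i).choose (2 * (p - 1)) : k)) •
        ⨂ₜ[k] i, EElt k (p - 1 - r i) (p - 1) (γ i)))))
  simp only [Fintype.mem_piFinset, mem_range] at hγ
  have hchar : ∑ c : F, ι c ^ ∑ i : Fin n, p ^ (i : ℕ) * (K i - γ i) =
      (if ∀ i, K i - γ i = p - 1 then -1 else 0) +
        (if ∀ i, K i - γ i = 2 * (p - 1) then -1 else 0) := by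
    simp_rw [← map_pow, ← map_sum, sum_pow_sum_digits hF (fun i => K i - γ i) fun i => by
      have := hγ i; have := hK i; omega]
    split_ifs <;> simp
  rw [hchar]
  split_ifs with h₁ h₂ h₂
  · rw [← hterm γ _ h₁, ← hterm γ _ h₂]
    module
  · rw [← hterm γ _ h₁]
    module
  · rw [← hterm γ _ h₂]
    module
  · simp

lemma sum_bigRep_uElt_tprod_EElt_eq_zero [CharP k p] (hF : Fintype.card F = p ^ n)
    (K : Fin n → ℕ) (hK : ∀ i, K i ≤ p - 1 - r i + (p - 1)) {j : Fin n} (hKj : K j = p - 1)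
    (hrj : r j < p - 1) :
    ∑ c : F, bigRep F k ι p r (uElt F c) (⨂ₜ[k] i, EElt k (p - 1 - r i) (p - 1) (K i)) = 0 := by
  have hp := (Fact.out : p.Prime).two_le
  have hcoef : ((p - 1 - r j + (p - 1) - (K j - (p - 1))).choose (p - 1) : k) = 0 := by
    rw [hKj, Nat.sub_self, Nat.sub_zero]
    exact cast_choose_sub_one_eq_zero k p hrj
  rw [sum_bigRep_uElt_tprod_EElt_eq F k ι p r hF K hK,
    if_neg (show ¬∀ i, 2 * (p - 1) ≤ K i from fun h => by have := h j; omega),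
    prod_eq_zero (mem_univ j) hcoef]
  simp

lemma sum_uElt_nsElt_inv_bEps_eq_zero [CharP k p] (hF : Fintype.card F = p ^ n)
    (hr : ∀ i, r i ≤ p - 1) (ε : Fin n → ℕ) {j : Fin n} (hj : ε j = 0) (hrj : r j ≠ p - 1) :
    ∑ c : F, bigRep F k ι p r (uElt F c) (bigRep F k ι p r (nsElt F)⁻¹ (bEps k p r ε)) = 0 := by
  have hJ : ∀ i, (1 - ε i) * (p - 1 - r i) ≤ p - 1 - r i + (p - 1) := fun i =>
    (Nat.mul_le_mul_right _ (Nat.sub_le 1 (ε i))).trans (by omega)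
  rw [bEps, bigRep_nsElt_inv_tprod_EElt F k ι p r _ hJ]
  simp_rw [map_smul]
  rw [← smul_sum, sum_bigRep_uElt_tprod_EElt_eq_zero F k ι p r hF _ (fun i => Nat.sub_le _ _)
    (j := j) (by rw [hj]; omega) (by have := hr j; omega), smul_zero]

lemma sum_uElt_nsElt_inv_bEps_one [CharP k p] (hF : Fintype.card F = p ^ n)
    (hr : ∀ i, r i ≤ p - 1) :
    ∑ c : F, bigRep F k ι p r (uElt F c) (bigRep F k ι p r (nsElt F)⁻¹ (bEps k p r 1)) =
      (-1 : k) ^ (∑ i : Fin n, r i * p ^ (i : ℕ)) •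
        -(bEps k p r 0 + if ∀ i, r i = 0 then bEps k p r 1 else 0) := by
  have hp := (Fact.out : p.Prime).two_le
  have hb₁ : bEps k p r 1 = ⨂ₜ[k] i, EElt k (p - 1 - r i) (p - 1) 0 := by simp [bEps]
  have hb₀ : bEps k p r 0 = ⨂ₜ[k] i, EElt k (p - 1 - r i) (p - 1) (p - 1 - r i) := by simp [bEps]
  rw [hb₁, hb₀, bigRep_nsElt_inv_tprod_EElt F k ι p r _ fun i => Nat.zero_le _]
  simp_rw [Nat.sub_zero, map_smul]
  rw [← smul_sum, sum_bigRep_uElt_tprod_EElt_eq F k ι p r hF _ fun i => le_rfl,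
    prod_neg_one_pow_eq k p r hr, if_pos fun i => by omega]
  congr 1
  have hE₀ : ∀ i, p - 1 - r i + (p - 1) - (p - 1) = p - 1 - r i := fun i => by omega
  simp_rw [hE₀, show ∀ i, p - 1 - r i + (p - 1) - (p - 1 - r i) = p - 1 from fun i => by omega,
    Nat.choose_self, Nat.cast_one, prod_const_one, one_smul]
  by_cases h₀ : ∀ i, r i = 0
  · have hD : ∀ i, p - 1 - r i + (p - 1) = 2 * (p - 1) := fun i => by have := h₀ i; omega
    rw [if_pos fun i => (hD i).ge, if_pos h₀]
    simp_rw [hD, Nat.sub_self, Nat.sub_zero, Nat.choose_self, Nat.cast_one, prod_const_one,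
      one_smul]
    exact (neg_add _ _).symm
  · rw [if_neg fun h => h₀ fun i => by have := h i; have := hr i; omega, if_neg h₀, add_zero,
      add_zero]

end TwistedTensor

theorem stmt_14 (hF : Fintype.card F = p ^ n)
    [CharP k p]
    (r : Fin n → ℕ) (hr : ∀ i, r i ≤ p - 1) :
    -- (i)
    (∀ ε : Fin n → ℕ, (∀ i, ε i ≤ 1) → (∃ j, ε j = 0 ∧ r j ≠ p - 1) →
      ∑ c : F, bigRep F k ι p r (uElt F c)
        (bigRep F k ι p r ((nsElt F)⁻¹) (bEps k p r ε)) = 0) ∧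
    -- (ii)  (here `b_𝟏 = bEps k p r 1` and `b_𝟎 = bEps k p r 0`)
    ((∃ j, r j ≠ 0) →
      ∑ c : F, bigRep F k ι p r (uElt F c)
          (bigRep F k ι p r ((nsElt F)⁻¹) (bEps k p r 1)) =
        ((-1 : k) ^ (1 + ∑ i : Fin n, r i * p ^ (i : ℕ))) • bEps k p r 0) ∧
    -- (iii)
    ((∀ i, r i = 0) →
      ∑ c : F, bigRep F k ι p r (uElt F c)
          (bigRep F k ι p r ((nsElt F)⁻¹) (bEps k p r 1)) =
        -(bEps k p r 0 + bEps k p r 1)) := by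
  refine ⟨fun ε _ ⟨j, hj, hrj⟩ => sum_uElt_nsElt_inv_bEps_eq_zero F k ι p r hF hr ε hj hrj,
    fun ⟨j, hj⟩ => ?_, fun h₀ => ?_⟩
  · rw [sum_uElt_nsElt_inv_bEps_one F k ι p r hF hr, if_neg fun h => hj (h j), add_zero, pow_add]
    module
  · simp [sum_uElt_nsElt_inv_bEps_one F k ι p r hF hr, h₀]

end
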